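/- Let P be an irreflexive binary relation on ω. If there is a continuous homomorphism from the directed shift graph D_S to (ω,P), then there is a continuous homomorphism from D_S to the restriction of D_S to Unf(P). -/

import Mathlib

/-!
By continuity, `φ X < φ (S X)` is a clopen condition on `X`, so the clopen case of the
Galvin–Prikry theorem gives an infinite `N ⊆ ω` all of whose infinite subsets `X` satisfy the
same alternative. It cannot be `φ X > φ (S X)`: along `X, S X, S² X, …` that would be an
infinite descent in `ω`; irreflexivity of `P` excludes equality. So `ψ X := φ (N ∘ X)` is a
continuous `P`-homomorphism increasing along the shift, and `X ↦ {ψ (Sⁿ X) : n ∈ ω}` works.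
-/

/-- The space `[ω]^ω` of infinite subsets of `ω`, identified with their strictly
increasing enumerations, as a subspace of the Baire space `ℕ → ℕ`. -/
abbrev InfSub := {g : ℕ → ℕ // StrictMono g}

/-- The shift `S(X) = X ∖ {min X}`. -/
def shiftS (X : InfSub) : InfSub :=
  ⟨fun n => X.1 (n + 1), fun _ _ h => X.2 (Nat.succ_lt_succ h)⟩

/-- Edge relation of the directed shift graph `D_S`. -/
def shiftEdge (X Y : InfSub) : Prop := X ≠ Y ∧ shiftS X = Y

/-- Edge relation of the symmetric shift graph `G_S`. -/
def shiftAdj (X Y : InfSub) : Prop := X ≠ Y ∧ (shiftS X = Y ∨ shiftS Y = X)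

/-- `Unf(P)`: the set of `X` whose consecutive elements are `P`-related. -/
def UnfRel (P : ℕ → ℕ → Prop) : Set InfSub :=
  {X | ∀ i, P (X.1 i) (X.1 (i + 1))}

open Set PiNat

theorem continuous_shiftS : Continuous shiftS :=
  continuous_induced_rng.2 <|
    continuous_pi fun i => (continuous_apply (i + 1)).comp continuous_subtype_val

theorem shiftS_ne_self (X : InfSub) : shiftS X ≠ X := fun h =>
  (X.2 Nat.zero_lt_one).ne (congrArg (fun Z : InfSub => Z.1 0) h).symm

theorem shiftEdge_iff {X Y : InfSub} : shiftEdge X Y ↔ shiftS X = Y :=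
  ⟨And.right, fun h => ⟨fun hXY => shiftS_ne_self X (h.trans hXY.symm), h⟩⟩

theorem range_shiftS_subset (X : InfSub) : range (shiftS X).1 ⊆ range X.1 := by
  rintro _ ⟨j, rfl⟩
  exact ⟨j + 1, rfl⟩

theorem lt_of_mem_range_shiftS {X : InfSub} {v : ℕ} (h : v ∈ range (shiftS X).1) : X.1 0 < v := by
  obtain ⟨j, rfl⟩ := h
  exact X.2 j.succ_pos

/-- The subset `{N(x) : x ∈ X}` of `N`. -/
def InfSub.comp (N X : InfSub) : InfSub := ⟨N.1 ∘ X.1, N.2.comp X.2⟩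

theorem InfSub.continuous_comp (N : InfSub) : Continuous (InfSub.comp N) :=
  continuous_induced_rng.2 <| continuous_pi fun i =>
    (continuous_of_discreteTopology (f := N.1)).comp
      ((continuous_apply i).comp continuous_subtype_val)

theorem InfSub.comp_shiftS (N X : InfSub) : InfSub.comp N (shiftS X) = shiftS (InfSub.comp N X) :=
  rfl

theorem InfSub.range_comp_subset (N X : InfSub) : range (InfSub.comp N X).1 ⊆ range N.1 := by
  rintro _ ⟨i, rfl⟩
  exact ⟨X.1 i, rfl⟩

section GalvinPrikry

variable {α : Type*} (c : InfSub → α)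

theorem exists_prefix_determines [TopologicalSpace α] [DiscreteTopology α] (hc : Continuous c)
    (X : InfSub) :
    ∃ n, ∀ Y : InfSub, (∀ i < n, Y.1 i = X.1 i) → c Y = c X := by
  obtain ⟨t, ht, hpre⟩ := isOpen_induced_iff.1 ((isOpen_discrete {c X}).preimage hc)
  have hXt : X.1 ∈ t := show X ∈ Subtype.val ⁻¹' t by rw [hpre]; rfl
  obtain ⟨_, ⟨y, n, rfl⟩, hXy, hyt⟩ :=
    (isTopologicalBasis_cylinders _).exists_subset_of_mem_open hXt ht
  refine ⟨n, fun Y hY => ?_⟩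
  have hYt : Y ∈ Subtype.val ⁻¹' t := hyt (mem_cylinder_iff_eq.1 hXy ▸ mem_cylinder_iff.2 hY)
  rw [hpre] at hYt
  exact hYt

/-- The Ellentuck basic set `[s, N]`. -/
def ellentuck (s : List ℕ) (N : InfSub) : Set InfSub :=
  {X | (List.range s.length).map X.1 = s ∧ ∀ i ≥ s.length, X.1 i ∈ range N.1}

theorem mem_ellentuck_append {s : List ℕ} {N : InfSub} {X : InfSub}
    (hpre : (List.range s.length).map X.1 = s) (htail : ∀ i > s.length, X.1 i ∈ range N.1) :
    X ∈ ellentuck (s ++ [X.1 s.length]) N := by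
  refine ⟨?_, fun i hi => htail i ?_⟩
  · rw [List.length_append, List.length_singleton, List.range_succ, List.map_append, hpre]
    rfl
  · simpa using hi

def Decided (s : List ℕ) : Prop :=
  ∀ M : InfSub, ∃ N : InfSub, range N.1 ⊆ range M.1 ∧ ∃ b, ∀ X ∈ ellentuck s N, c X = b

theorem exists_prefix_of_not_decided {s : List ℕ} (hs : ¬ Decided c s) :
    ∃ X : InfSub, (List.range s.length).map X.1 = s := by
  by_contra! h
  exact hs fun M => ⟨M, subset_rfl, c M, fun X hX => (h X hX.1).elim⟩

/-- Fusion: decide `s ++ [mᵢ]` successively along `m₀ < m₁ < ⋯`, each time inside the previous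
witness, and keep the `mᵢ` whose colour occurs infinitely often. -/
theorem Decided.of_forall_append [Finite α] {s : List ℕ} (h : ∀ n, Decided c (s ++ [n])) :
    Decided c s := by
  intro M
  choose F hF col hcol using h
  let seq : ℕ → InfSub := fun i => Nat.rec M (fun _ N => F (N.1 0) (shiftS N)) i
  let m : ℕ → ℕ := fun i => (seq i).1 0
  let ε : ℕ → α := fun i => col (m i) (shiftS (seq i))
  have range_succ (i : ℕ) : range (seq (i + 1)).1 ⊆ range (shiftS (seq i)).1 := hF _ _
  have m_mono : StrictMono m :=
    strictMono_nat_of_lt_succ fun i => lt_of_mem_range_shiftS (range_succ i ⟨0, rfl⟩)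
  have range_anti : Antitone fun i => range (seq i).1 :=
    antitone_nat_of_succ_le fun i => (range_succ i).trans (range_shiftS_subset _)
  obtain ⟨b, hb⟩ := Finite.exists_infinite_fiber ε
  have hb : {i | ε i = b}.Infinite := Set.infinite_coe_iff.1 hb
  refine ⟨⟨m ∘ Nat.nth (ε · = b), m_mono.comp (Nat.nth_strictMono hb)⟩, ?_, b, ?_⟩
  · rintro _ ⟨k, rfl⟩
    exact range_anti (Nat.zero_le _) ⟨0, rfl⟩
  rintro X ⟨hpre, htail⟩
  obtain ⟨k, hk⟩ := htail s.length le_rfl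
  set j := Nat.nth (ε · = b) k
  have hk : m j = X.1 s.length := hk
  have hX : X ∈ ellentuck (s ++ [X.1 s.length]) (seq (j + 1)) := by
    refine mem_ellentuck_append hpre fun i hi => ?_
    obtain ⟨l, hl⟩ := htail i hi.le
    have hl : m (Nat.nth (ε · = b) l) = X.1 i := hl
    have hjl : j < Nat.nth (ε · = b) l := m_mono.lt_iff_lt.1 (hk ▸ hl ▸ X.2 hi)
    exact hl ▸ range_anti hjl ⟨0, rfl⟩
  rw [← hk] at hX
  rw [← Nat.nth_mem_of_infinite hb k]
  exact hcol _ _ _ hX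

/-- If `[]` were undecided, undecided one-point extensions would build a stem of some `X` of
every length, while continuity decides `c` on a long enough stem of `X`. -/
theorem decided_nil [TopologicalSpace α] [DiscreteTopology α] [Finite α] (hc : Continuous c) :
    Decided c [] := by
  by_contra hnil
  have hnext (s : List ℕ) : ∃ n, ¬ Decided c s → ¬ Decided c (s ++ [n]) := by
    by_cases hs : Decided c s
    · exact ⟨0, absurd hs⟩
    · obtain ⟨n, hn⟩ := not_forall.1 (mt (Decided.of_forall_append c) hs)
      exact ⟨n, fun _ => hn⟩
  choose next hnext using hnext
  obtain ⟨stem, stem_zero, stem_succ⟩ : ∃ stem : ℕ → List ℕ,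
      stem 0 = [] ∧ ∀ k, stem (k + 1) = stem k ++ [next (stem k)] :=
    ⟨fun k => Nat.rec [] (fun _ s => s ++ [next s]) k, rfl, fun _ => rfl⟩
  set x : ℕ → ℕ := fun k => next (stem k)
  have stem_bad (k : ℕ) : ¬ Decided c (stem k) := by
    induction k with
    | zero => exact stem_zero ▸ hnil
    | succ k ih => exact stem_succ k ▸ hnext _ ih
  have stem_eq (k : ℕ) : stem k = (List.range k).map x := by
    induction k with
    | zero => exact stem_zero
    | succ k ih => rw [stem_succ, List.range_succ, List.map_append, ← ih]; rfl
  have x_mono : StrictMono x := strictMono_nat_of_lt_succ fun k => by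
    obtain ⟨Y, hY⟩ := exists_prefix_of_not_decided c (stem_bad (k + 2))
    rw [stem_eq, List.length_map, List.length_range, List.map_inj_left] at hY
    rw [← hY k (by simp), ← hY (k + 1) (by simp)]
    exact Y.2 k.lt_succ_self
  obtain ⟨n, hn⟩ := exists_prefix_determines c hc ⟨x, x_mono⟩
  refine stem_bad n fun M => ⟨M, subset_rfl, c ⟨x, x_mono⟩, fun Y ⟨hY, _⟩ => hn Y fun i hi => ?_⟩
  rw [stem_eq, List.length_map, List.length_range, List.map_inj_left] at hY
  exact hY i (List.mem_range.2 hi)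

/-- The clopen Galvin–Prikry theorem. -/
theorem exists_homogeneous_of_continuous [TopologicalSpace α] [DiscreteTopology α] [Finite α]
    (hc : Continuous c) :
    ∃ N : InfSub, ∃ b, ∀ X : InfSub, range X.1 ⊆ range N.1 → c X = b := by
  obtain ⟨N, -, b, hb⟩ := decided_nil c hc ⟨id, strictMono_id⟩
  exact ⟨N, b, fun X hX => hb X ⟨rfl, fun i _ => hX ⟨i, rfl⟩⟩⟩

end GalvinPrikry

theorem exists_comp_lt_shiftS {φ : InfSub → ℕ} (hφ : Continuous φ)
    (hne : ∀ X, φ X ≠ φ (shiftS X)) :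
    ∃ N : InfSub, ∀ X, φ (InfSub.comp N X) < φ (shiftS (InfSub.comp N X)) := by
  have hc : Continuous fun X => decide (φ X < φ (shiftS X)) :=
    (continuous_of_discreteTopology (f := fun p : ℕ × ℕ => decide (p.1 < p.2))).comp
      (hφ.prodMk (hφ.comp continuous_shiftS))
  obtain ⟨N, b, hb⟩ := exists_homogeneous_of_continuous _ hc
  refine ⟨N, fun X => ?_⟩
  cases b with
  | true => simpa using hb _ (InfSub.range_comp_subset N X)
  | false =>
    refine absurd ?_ (not_strictAnti_of_wellFoundedLT fun k => φ (InfSub.comp N (shiftS^[k] X)))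
    refine strictAnti_nat_of_succ_lt fun k => ?_
    have hge := hb _ (InfSub.range_comp_subset N (shiftS^[k] X))
    rw [Function.iterate_succ_apply', InfSub.comp_shiftS]
    simp only [decide_eq_false_iff_not, not_lt] at hge
    exact hge.lt_of_ne (hne _).symm

section ShiftOrbit

variable (ψ : InfSub → ℕ) (hψ : ∀ X, ψ X < ψ (shiftS X))

/-- `Φ(X) = {ψ(Sⁿ X) : n ∈ ω}`. -/
def shiftOrbit (X : InfSub) : InfSub :=
  ⟨fun n => ψ (shiftS^[n] X), strictMono_nat_of_lt_succ fun n => by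
    simpa only [Function.iterate_succ_apply'] using hψ (shiftS^[n] X)⟩

theorem shiftOrbit_shiftS (X : InfSub) :
    shiftOrbit ψ hψ (shiftS X) = shiftS (shiftOrbit ψ hψ X) :=
  Subtype.ext <| funext fun n => congrArg ψ (Function.iterate_succ_apply shiftS n X).symm

theorem continuous_shiftOrbit (hc : Continuous ψ) : Continuous (shiftOrbit ψ hψ) :=
  continuous_induced_rng.2 <| continuous_pi fun n => hc.comp (continuous_shiftS.iterate n)

theorem shiftOrbit_mem_unfRel {P : ℕ → ℕ → Prop} (hP : ∀ X, P (ψ X) (ψ (shiftS X)))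
    (X : InfSub) : shiftOrbit ψ hψ X ∈ UnfRel P := fun n => by
  simpa only [shiftOrbit, Function.iterate_succ_apply'] using hP (shiftS^[n] X)

theorem shiftEdge_shiftOrbit {X Y : InfSub} (h : shiftEdge X Y) :
    shiftEdge (shiftOrbit ψ hψ X) (shiftOrbit ψ hψ Y) := by
  rw [shiftEdge_iff] at h ⊢
  rw [← h, shiftOrbit_shiftS]

end ShiftOrbit

/-- for irreflexive `P`, a continuous homomorphism from `D_S` to
`(ω, P)` yields a continuous homomorphism from `D_S` to `D_S ↾ Unf(P)`. -/
theorem continuous_hom_to_unf (P : ℕ → ℕ → Prop) (hP : Irreflexive P)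
    (h : ∃ φ : InfSub → ℕ, Continuous φ ∧ ∀ X : InfSub, P (φ X) (φ (shiftS X))) :
    ∃ Φ : InfSub → InfSub, Continuous Φ ∧ (∀ X : InfSub, Φ X ∈ UnfRel P) ∧
      ∀ X Y : InfSub, shiftEdge X Y → shiftEdge (Φ X) (Φ Y) := by
  obtain ⟨φ, hφc, hφP⟩ := h
  obtain ⟨N, hN⟩ := exists_comp_lt_shiftS hφc fun X he => hP _ (he ▸ hφP X)
  let ψ := φ ∘ InfSub.comp N
  -- `hN` is `∀ X, ψ X < ψ (S X)` since `N ∘ S X = S (N ∘ X)` definitionally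
  have hψP (X : InfSub) : P (ψ X) (ψ (shiftS X)) := hφP (InfSub.comp N X)
  exact ⟨shiftOrbit ψ hN, continuous_shiftOrbit ψ hN (hφc.comp (InfSub.continuous_comp N)),
    shiftOrbit_mem_unfRel ψ hN hψP, fun _ _ => shiftEdge_shiftOrbit ψ hN⟩
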